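/- Let A ∈ GL(d, ℝ) be expansive. Let 𝒟_A = {A^i([0,1]^d + k) : i ∈ ℤ, k ∈ ℤ^d} be the collection of dilated cubes, scale(A^i([0,1]^d+k)) = i, and for D ∈ 𝒟_A let 𝒯(D) = {D' ∈ 𝒟_A : m(D' ∩ D) > 0 and scale(D') ≤ scale(D)}. Then there exists N = N(A,d) ∈ ℕ such that for all D ∈ 𝒟_A: ⋃_{D' ∈ 𝒯(D)} D' ⊆ ⋃_{n ∈ ℤ^d, |n| ≤ N} (D + A^{scale(D)} n). -/

import Mathlib

open MeasureTheory
open scoped Pointwise ENNReal Classical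

/-- A real matrix is expansive if it is invertible and all its complex eigenvalues
have absolute value strictly greater than `1`. -/
def Expansive {d : ℕ} (A : Matrix (Fin d) (Fin d) ℝ) : Prop :=
  IsUnit A ∧ ∀ μ ∈ spectrum ℂ (A.map (algebraMap ℝ ℂ)), 1 < ‖μ‖

/-- The action of a matrix on Euclidean space. -/
def ms {d : ℕ} (A : Matrix (Fin d) (Fin d) ℝ) (x : EuclideanSpace ℝ (Fin d)) :
    EuclideanSpace ℝ (Fin d) := WithLp.toLp 2 (A.mulVec x)

/-- The integer vector `n` regarded as a point of Euclidean space. -/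
def zvec {d : ℕ} (n : Fin d → ℤ) : EuclideanSpace ℝ (Fin d) := WithLp.toLp 2 (fun t => (n t : ℝ))

/-- The dilated cube `A^i ([0,1]^d + k)`. -/
def dcube {d : ℕ} (A : Matrix (Fin d) (Fin d) ℝ) (i : ℤ) (k : Fin d → ℤ) :
    Set (EuclideanSpace ℝ (Fin d)) :=
  ms (A ^ i) '' {x | ∀ t, (k t : ℝ) ≤ x t ∧ x t ≤ (k t : ℝ) + 1}

/-!
Rescaling by `A^(-i)` reduces the statement to `D = [0,1]^d + k` and `D' = A^j ([0,1]^d + k')`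
with `j ≤ 0`. The spectrum of `A⁻¹` lies in the open unit disc, so by Gelfand's formula the powers
of `A⁻¹` are uniformly bounded, say by `C`. Hence `D'` has diameter at most `C√d`; as it meets `D`,
each of its points lies in an integer translate `D + n` with `‖n‖ ≤ (C + 1)√d`.
-/

open Matrix Filter

section Banach

variable {𝔸 : Type*} [NormedRing 𝔸] [NormedAlgebra ℂ 𝔸] [CompleteSpace 𝔸]

theorem exists_norm_pow_le_of_forall_mem_spectrum_norm_lt_one {a : 𝔸}
    (ha : ∀ z ∈ spectrum ℂ a, ‖z‖ < 1) : ∃ C, 0 ≤ C ∧ ∀ n : ℕ, ‖a ^ n‖ ≤ C := by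
  have hρ : spectralRadius ℂ a < 1 := by
    rcases (spectrum ℂ a).eq_empty_or_nonempty with h | h
    · simp [spectralRadius, h]
    · exact spectrum.spectralRadius_lt_of_forall_lt_of_nonempty h fun z hz => by
        exact_mod_cast ha z hz
  have hev : ∀ᶠ n : ℕ in atTop, ‖a ^ n‖ ≤ 1 := by
    filter_upwards [eventually_ge_atTop 1,
      (spectrum.pow_nnnorm_pow_one_div_tendsto_nhds_spectralRadius a).eventually_lt_const hρ]
      with n hn1 hn
    by_contra! h
    refine hn.not_ge (ENNReal.one_le_rpow ?_ (by positivity))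
    exact_mod_cast h.le
  obtain ⟨C, hC⟩ := (isBoundedUnder_of_eventually_le hev).bddAbove_range
  exact ⟨C, (norm_nonneg _).trans (hC ⟨0, rfl⟩), fun n => hC ⟨n, rfl⟩⟩

end Banach

section Euclidean

variable {ι : Type*} [Fintype ι]

theorem EuclideanSpace.norm_le_mul_sqrt_card_of_abs_le {x : EuclideanSpace ℝ ι} {c : ℝ}
    (hc : 0 ≤ c) (hx : ∀ t, |x t| ≤ c) : ‖x‖ ≤ c * √(Fintype.card ι) := by
  rw [EuclideanSpace.norm_eq, ← Real.sqrt_sq hc, ← Real.sqrt_mul' _ (by positivity)]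
  refine Real.sqrt_le_sqrt ?_
  calc ∑ t, ‖x t‖ ^ 2 ≤ ∑ _t : ι, c ^ 2 :=
        Finset.sum_le_sum fun t _ => pow_le_pow_left₀ (norm_nonneg _) (hx t) 2
    _ = c ^ 2 * Fintype.card ι := by simp [mul_comm]

theorem EuclideanSpace.norm_toLp_ofReal (x : EuclideanSpace ℝ ι) :
    ‖(WithLp.toLp 2 fun t => (x t : ℂ) : EuclideanSpace ℂ ι)‖ = ‖x‖ := by
  simp [EuclideanSpace.norm_eq]

def unitCube (k : ι → ℤ) : Set (EuclideanSpace ℝ ι) :=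
  {x | ∀ t, (k t : ℝ) ≤ x t ∧ x t ≤ (k t : ℝ) + 1}

theorem norm_sub_le_of_mem_unitCube {k : ι → ℤ} {p q : EuclideanSpace ℝ ι}
    (hp : p ∈ unitCube k) (hq : q ∈ unitCube k) : ‖p - q‖ ≤ √(Fintype.card ι) := by
  simpa using EuclideanSpace.norm_le_mul_sqrt_card_of_abs_le zero_le_one fun t => by
    have := hp t; have := hq t
    rw [PiLp.sub_apply, abs_le]; constructor <;> linarith

end Euclidean

variable {d : ℕ}

theorem dcube_eq_image_unitCube (A : Matrix (Fin d) (Fin d) ℝ) (i : ℤ) (k : Fin d → ℤ) :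
    dcube A i k = ms (A ^ i) '' unitCube k :=
  rfl

theorem exists_sub_zvec_mem_unitCube {k : Fin d → ℤ} {w : EuclideanSpace ℝ (Fin d)}
    (hw : w ∈ unitCube k) (u : EuclideanSpace ℝ (Fin d)) :
    ∃ n, u - zvec n ∈ unitCube k ∧ ‖zvec n‖ ≤ ‖u - w‖ + √d := by
  set n : Fin d → ℤ := fun t => ⌊u t⌋ - k t
  have hn : ∀ t, (zvec n) t = ⌊u t⌋ - k t := by simp [n, zvec]
  refine ⟨n, fun t => ?_, ?_⟩
  · rw [PiLp.sub_apply, hn]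
    constructor <;> linarith [Int.floor_le (u t), Int.lt_floor_add_one (u t)]
  have herr : ‖zvec n - (u - w)‖ ≤ √d := by
    refine (EuclideanSpace.norm_le_mul_sqrt_card_of_abs_le zero_le_one fun t => ?_).trans_eq
      (by simp)
    have := hw t
    rw [PiLp.sub_apply, PiLp.sub_apply, hn, abs_le]
    constructor <;> linarith [Int.floor_le (u t), Int.lt_floor_add_one (u t)]
  calc ‖zvec n‖ = ‖(u - w) + (zvec n - (u - w))‖ := by rw [add_sub_cancel]
    _ ≤ ‖u - w‖ + √d := (norm_add_le _ _).trans (by linarith)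

section MatrixAction

theorem ms_mul (M N : Matrix (Fin d) (Fin d) ℝ) (x : EuclideanSpace ℝ (Fin d)) :
    ms (M * N) x = ms M (ms N x) := by
  simp [ms, mulVec_mulVec]

theorem ms_one (x : EuclideanSpace ℝ (Fin d)) : ms 1 x = x := by
  simp [ms]

theorem ms_sub (M : Matrix (Fin d) (Fin d) ℝ) (x y : EuclideanSpace ℝ (Fin d)) :
    ms M (x - y) = ms M x - ms M y :=
  map_sub (toEuclideanCLM (𝕜 := ℝ) M) x y

theorem ms_zpow_add {A : Matrix (Fin d) (Fin d) ℝ} (hA : IsUnit A.det) (i j : ℤ)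
    (x : EuclideanSpace ℝ (Fin d)) : ms (A ^ (i + j)) x = ms (A ^ i) (ms (A ^ j) x) := by
  rw [zpow_add hA, ms_mul]

theorem norm_ms_le (M : Matrix (Fin d) (Fin d) ℝ) (x : EuclideanSpace ℝ (Fin d)) :
    ‖ms M x‖ ≤ ‖toEuclideanCLM (𝕜 := ℂ) (M.map (algebraMap ℝ ℂ))‖ * ‖x‖ := by
  have h : toEuclideanCLM (𝕜 := ℂ) (M.map (algebraMap ℝ ℂ)) (WithLp.toLp 2 fun t => (x t : ℂ))
      = WithLp.toLp 2 fun t => ((ms M x) t : ℂ) := by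
    ext t
    simpa [ms, Function.comp_def] using (RingHom.map_mulVec (algebraMap ℝ ℂ) M x.ofLp t).symm
  rw [← EuclideanSpace.norm_toLp_ofReal, ← h, ← EuclideanSpace.norm_toLp_ofReal x]
  exact ContinuousLinearMap.le_opNorm _ _

end MatrixAction

namespace Expansive

variable {A : Matrix (Fin d) (Fin d) ℝ}

theorem isUnit_det (hA : Expansive A) : IsUnit A.det := (isUnit_iff_isUnit_det A).mp hA.1

theorem norm_lt_one_of_mem_spectrum_inv (hA : Expansive A) {z : ℂ}
    (hz : z ∈ spectrum ℂ (A⁻¹.map (algebraMap ℝ ℂ))) : ‖z‖ < 1 := by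
  set u := Units.map (algebraMap ℝ ℂ).mapMatrix.toMonoidHom hA.1.unit
  have hu : (u : Matrix (Fin d) (Fin d) ℂ) = A.map (algebraMap ℝ ℂ) := rfl
  have hu_inv : ((u⁻¹ : _ˣ) : Matrix (Fin d) (Fin d) ℂ) = A⁻¹.map (algebraMap ℝ ℂ) := by
    simp [u, Units.coe_map_inv, coe_units_inv]
  rw [← hu_inv, ← spectrum.map_inv, Set.mem_inv, hu] at hz
  have := hA.2 _ hz
  rw [norm_inv] at this
  exact (one_lt_inv_iff₀.mp this).2

theorem exists_norm_ms_zpow_le (hA : Expansive A) :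
    ∃ C, 0 ≤ C ∧ ∀ j : ℤ, j ≤ 0 → ∀ x, ‖ms (A ^ j) x‖ ≤ C * ‖x‖ := by
  set T := toEuclideanCLM (𝕜 := ℂ) (A⁻¹.map (algebraMap ℝ ℂ))
  obtain ⟨C, hC0, hC⟩ := exists_norm_pow_le_of_forall_mem_spectrum_norm_lt_one (a := T)
    fun z hz => hA.norm_lt_one_of_mem_spectrum_inv (by rwa [AlgEquiv.spectrum_eq] at hz)
  refine ⟨C, hC0, fun j hj x => ?_⟩
  obtain ⟨n, rfl⟩ := Int.exists_eq_neg_ofNat hj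
  have hT : toEuclideanCLM (𝕜 := ℂ) ((A ^ (-(n : ℤ))).map (algebraMap ℝ ℂ)) = T ^ n := by
    rw [zpow_neg_natCast, ← inv_pow', ← RingHom.mapMatrix_apply, map_pow, map_pow]
    rfl
  calc ‖ms (A ^ (-(n : ℤ))) x‖ ≤ ‖T ^ n‖ * ‖x‖ := hT ▸ norm_ms_le _ x
    _ ≤ C * ‖x‖ := by gcongr; exact hC n

end Expansive

/-- Tent-cover lemma: there is `N = N(A,d)` such that for every dilated cube
`D = A^i([0,1]^d + k)`, the union of all cubes in the tent over `D` is contained in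
`⋃_{|n| ≤ N} (D + A^i n)`. -/
theorem stmt11 {d : ℕ} (A : Matrix (Fin d) (Fin d) ℝ) (hA : Expansive A) :
    ∃ N : ℕ, ∀ (i : ℤ) (k : Fin d → ℤ) (i' : ℤ) (k' : Fin d → ℤ),
      i' ≤ i → 0 < volume (dcube A i' k' ∩ dcube A i k) →
      dcube A i' k' ⊆
        ⋃ n ∈ {n : Fin d → ℤ | ‖zvec n‖ ≤ (N : ℝ)},
          (fun y => y + ms (A ^ i) (zvec n)) '' dcube A i k := by
  obtain ⟨C, hC0, hC⟩ := hA.exists_norm_ms_zpow_le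
  refine ⟨⌈(C + 1) * √d⌉₊, fun i k i' k' hii' hvol => ?_⟩
  simp only [dcube_eq_image_unitCube] at hvol ⊢
  obtain ⟨_, ⟨q, hq, rfl⟩, w, hw, hwq⟩ := nonempty_of_measure_ne_zero hvol.ne'
  rintro _ ⟨p, hp, rfl⟩
  have hdet := hA.isUnit_det
  have hqw : ms (A ^ (-i + i')) q = w := by
    rw [ms_zpow_add hdet, ← hwq, ← ms_zpow_add hdet, neg_add_cancel, zpow_zero, ms_one]
  set u := ms (A ^ (-i + i')) p
  have hu : ‖u - w‖ ≤ C * √d := by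
    rw [← hqw, ← ms_sub]
    exact (hC _ (by omega) _).trans
      (mul_le_mul_of_nonneg_left (norm_sub_le_of_mem_unitCube hp hq |>.trans_eq (by simp)) hC0)
  obtain ⟨n, hn, hn_norm⟩ := exists_sub_zvec_mem_unitCube hw u
  refine Set.mem_iUnion₂.2 ⟨n, ?_, ms (A ^ i) (u - zvec n), ⟨_, hn, rfl⟩, ?_⟩
  · exact (hn_norm.trans (by linarith)).trans (Nat.le_ceil _)
  · dsimp only
    rw [ms_sub, sub_add_cancel, ← ms_zpow_add hdet, add_neg_cancel_left]
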